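/- Let A, B be n×n complex matrices such that |B + γ·A| ≥ |B| for all γ ∈ ℂ (i.e., |B + γ·A| − |B| is positive semidefinite for every γ ∈ ℂ). Then: (a) tr(BᴴA) = 0; and (b) for every p ∈ [1, ∞), B is Birkhoff–James orthogonal to A with respect to the Schatten p-norm, i.e. ‖B‖ₚ ≤ ‖B + γ·A‖ₚ for all γ ∈ ℂ. -/

import Mathlib

open Matrix ComplexOrder

namespace Matrix.PosSemidef

/-- The positive semidefinite square root of a positive semidefinite matrix
(the definition of Mathlib of December 2024, since removed from Mathlib). -/
noncomputable def sqrt {n 𝕜 : Type*} [Fintype n] [RCLike 𝕜] [DecidableEq n] {A : Matrix n n 𝕜}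
    (hA : PosSemidef A) : Matrix n n 𝕜 :=
  hA.1.eigenvectorUnitary.1 * diagonal ((↑) ∘ (√·) ∘ hA.1.eigenvalues) *
  (star hA.1.eigenvectorUnitary : Matrix n n 𝕜)

theorem posSemidef_sqrt {n 𝕜 : Type*} [Fintype n] [RCLike 𝕜] [DecidableEq n] {A : Matrix n n 𝕜}
    (hA : PosSemidef A) : PosSemidef hA.sqrt := by
  unfold sqrt
  apply PosSemidef.mul_mul_conjTranspose_same
  refine posSemidef_diagonal_iff.mpr fun i ↦ ?_
  rw [Function.comp_apply, RCLike.nonneg_iff]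
  constructor
  · simp only [Function.comp_apply, RCLike.ofReal_re]; exact Real.sqrt_nonneg _
  · simp only [Function.comp_apply, RCLike.ofReal_im]

end Matrix.PosSemidef

/-- The absolute value `|A| = (AᴴA)^(1/2)` of a complex matrix `A`. -/
noncomputable def matAbs {n : ℕ} (A : Matrix (Fin n) (Fin n) ℂ) : Matrix (Fin n) (Fin n) ℂ :=
  (Matrix.posSemidef_conjTranspose_mul_self A).sqrt

/-- The Schatten `p`-norm `‖A‖ₚ = (tr |A|^p)^(1/p)`, computed via the eigenvalues of `|A|`. -/
noncomputable def schattenNorm {n : ℕ} (p : ℝ) (A : Matrix (Fin n) (Fin n) ℂ) : ℝ :=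
  (∑ i, ((Matrix.posSemidef_conjTranspose_mul_self A).posSemidef_sqrt.1.eigenvalues i) ^ p) ^ (1 / p)

/-!
Write `S = |B|` and `T = |B + γA|`, so that `T - S ≥ 0`. Since `T² - S² = (T - S)T + S(T - S)` and
the trace of a product of positive semidefinite matrices is nonnegative, `tr T² ≥ tr S²`, that is
`‖B‖₂ ≤ ‖B + γA‖₂` for every `γ`; expanding this quadratic inequality in `γ` forces `tr(BᴴA) = 0`.

For the Schatten `p`-norms, compare the diagonal entries of `T - S` in an eigenbasis of `S`: with
`W` the unitary change of basis from that eigenbasis to one of `T`, the eigenvalues satisfy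
`s_j ≤ ∑ᵢ |W_ij|² t_i`, and `(|W_ij|²)` is doubly stochastic. Monotonicity and convexity of
`x ↦ x ^ p` (Jensen's inequality) then give `∑ s_j ^ p ≤ ∑ t_i ^ p`.
-/

open ComplexConjugate

namespace RCLike

variable {𝕜 : Type*} [RCLike 𝕜]

theorem eq_zero_of_forall_two_mul_re_add_norm_sq_mul_nonneg {c : 𝕜} {a : ℝ}
    (h : ∀ γ : 𝕜, 0 ≤ 2 * re (γ * c) + ‖γ‖ ^ 2 * a) : c = 0 := by
  set t : ℝ := 1 / (|a| + 1)
  have ht : 0 < t := by positivity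
  have hta : t * a < 2 := by
    have : t * |a| < 1 := by
      rw [div_mul_eq_mul_div, one_mul, div_lt_one (by positivity)]; linarith
    linarith [mul_le_mul_of_nonneg_left (le_abs_self a) ht.le]
  -- the direction `γ = -t c̄` makes the linear term `-2t‖c‖²` dominate
  have key := h (-(t : 𝕜) * conj c)
  have e1 : re (-(t : 𝕜) * conj c * c) = -t * ‖c‖ ^ 2 := by
    rw [mul_assoc, RCLike.conj_mul, ← ofReal_pow, ← ofReal_neg, ← ofReal_mul, ofReal_re, neg_mul]
  have e2 : ‖-(t : 𝕜) * conj c‖ ^ 2 = t ^ 2 * ‖c‖ ^ 2 := by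
    rw [norm_mul, norm_neg, norm_conj, norm_ofReal, abs_of_pos ht, mul_pow]
  rw [e1, e2] at key
  have : ‖c‖ ^ 2 * (t * (2 - t * a)) ≤ 0 := by nlinarith
  have hc : ‖c‖ ^ 2 ≤ 0 :=
    nonpos_of_mul_nonpos_left this (mul_pos ht (by linarith))
  simpa using hc

end RCLike

namespace Matrix

open RCLike

variable {m n 𝕜 : Type*} [Fintype m] [Fintype n] [RCLike 𝕜]

namespace PosSemidef

variable {M N : Matrix n n 𝕜}

theorem sqrt_mul_self [DecidableEq n] (hM : M.PosSemidef) : hM.sqrt * hM.sqrt = M := by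
  unfold sqrt
  conv_rhs => rw [hM.1.spectral_theorem, Unitary.conjStarAlgAut_apply]
  simp only [Matrix.mul_assoc]
  rw [← Matrix.mul_assoc (star hM.1.eigenvectorUnitary : Matrix n n 𝕜) _,
    Unitary.coe_star_mul_self, Matrix.one_mul, ← Matrix.mul_assoc (diagonal _) (diagonal _),
    diagonal_mul_diagonal]
  congr 3
  ext i
  simp only [Function.comp_apply]
  rw [← RCLike.ofReal_mul, Real.mul_self_sqrt (hM.eigenvalues_nonneg i)]

theorem trace_mul_nonneg (hM : M.PosSemidef) (hN : N.PosSemidef) : 0 ≤ (M * N).trace := by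
  classical
  have hR := hM.posSemidef_sqrt
  rw [← hM.sqrt_mul_self, Matrix.mul_assoc, trace_mul_comm, Matrix.mul_assoc]
  simpa [hR.1.eq, Matrix.mul_assoc] using (hN.conjTranspose_mul_mul_same hM.sqrt).trace_nonneg

theorem trace_mul_self_le_trace_mul_self (hM : M.PosSemidef) (hN : N.PosSemidef)
    (hNM : (N - M).PosSemidef) : (M * M).trace ≤ (N * N).trace := by
  have hsplit : N * N - M * M = (N - M) * N + M * (N - M) := by noncomm_ring
  have := add_nonneg (hNM.trace_mul_nonneg hN) (hM.trace_mul_nonneg hNM)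
  rwa [← trace_add, ← hsplit, trace_sub, sub_nonneg] at this

end PosSemidef

theorem trace_conjTranspose_mul_eq_zero_of_forall_le {A B : Matrix m n 𝕜}
    (h : ∀ γ : 𝕜, (Bᴴ * B).trace ≤ ((B + γ • A)ᴴ * (B + γ • A)).trace) :
    (Bᴴ * A).trace = 0 := by
  refine RCLike.eq_zero_of_forall_two_mul_re_add_norm_sq_mul_nonneg
    (a := re (Aᴴ * A).trace) fun γ => ?_
  have hexp : (B + γ • A)ᴴ * (B + γ • A) =
      Bᴴ * B + γ • (Bᴴ * A) + conj γ • (Bᴴ * A)ᴴ + (conj γ * γ) • (Aᴴ * A) := by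
    simp only [conjTranspose_add, conjTranspose_smul, conjTranspose_mul,
      conjTranspose_conjTranspose, Matrix.add_mul, Matrix.mul_add, Matrix.smul_mul,
      Matrix.mul_smul, RCLike.star_def]
    module
  have hle := (RCLike.le_iff_re_im.mp (h γ)).1
  rw [hexp] at hle
  simp only [trace_add, trace_smul, trace_conjTranspose, smul_eq_mul, map_add, RCLike.conj_mul,
    RCLike.star_def, ← map_mul, RCLike.conj_re, ← ofReal_pow, RCLike.re_ofReal_mul] at hle
  linarith

section DoublyStochastic

variable [DecidableEq n]

theorem of_norm_sq_mem_doublyStochastic_of_mem_unitaryGroup {U : Matrix n n 𝕜}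
    (hU : U ∈ unitaryGroup n 𝕜) :
    (of fun i j => ‖U i j‖ ^ 2 : Matrix n n ℝ) ∈ doublyStochastic ℝ n := by
  have hrow (i : n) : ∑ j, ‖U i j‖ ^ 2 = 1 := by
    have := congr_fun₂ (mem_unitaryGroup_iff.mp hU) i i
    simp only [mul_apply, star_apply, RCLike.star_def, RCLike.mul_conj, one_apply_eq] at this
    exact_mod_cast this
  have hcol (j : n) : ∑ i, ‖U i j‖ ^ 2 = 1 := by
    have := congr_fun₂ (mem_unitaryGroup_iff'.mp hU) j j
    simp only [mul_apply, star_apply, RCLike.star_def, RCLike.conj_mul, one_apply_eq] at this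
    exact_mod_cast this
  exact mem_doublyStochastic_iff_sum.mpr
    ⟨fun i j => by simp only [of_apply]; positivity, hrow, hcol⟩

theorem sum_le_sum_of_le_vecMul_of_mem_doublyStochastic {P : Matrix n n ℝ}
    (hP : P ∈ doublyStochastic ℝ n) {D : Set ℝ} {f : ℝ → ℝ} (hf : ConvexOn ℝ D f)
    (hf_mono : MonotoneOn f D) {x y : n → ℝ} (hxD : ∀ j, x j ∈ D) (hyD : ∀ i, y i ∈ D)
    (hxy : x ≤ y ᵥ* P) : ∑ j, f (x j) ≤ ∑ i, f (y i) := by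
  have hw₀ (j : n) : ∀ i ∈ Finset.univ, 0 ≤ P i j := fun i _ => nonneg_of_mem_doublyStochastic hP
  have hw₁ (j : n) : ∑ i, P i j = 1 := sum_col_of_mem_doublyStochastic hP j
  calc ∑ j, f (x j)
      ≤ ∑ j, f (∑ i, P i j • y i) := by
        refine Finset.sum_le_sum fun j _ => hf_mono (hxD j)
          (hf.1.sum_mem (hw₀ j) (hw₁ j) fun i _ => hyD i) ?_
        simpa [vecMul, dotProduct, mul_comm] using hxy j
    _ ≤ ∑ j, ∑ i, P i j • f (y i) :=
        Finset.sum_le_sum fun j _ => hf.map_sum_le (hw₀ j) (hw₁ j) fun i _ => hyD i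
    _ = ∑ i, f (y i) := by
        rw [Finset.sum_comm]
        simp only [smul_eq_mul, ← Finset.sum_mul, sum_row_of_mem_doublyStochastic hP, one_mul]

end DoublyStochastic

namespace IsHermitian

variable [DecidableEq n] {S T : Matrix n n 𝕜}

theorem eigenvalues_le_vecMul_of_sub_posSemidef (hS : S.IsHermitian) (hT : T.IsHermitian)
    (hST : (T - S).PosSemidef) :
    hS.eigenvalues ≤ hT.eigenvalues ᵥ* of fun i j =>
      ‖(star (hT.eigenvectorUnitary : Matrix n n 𝕜) * hS.eigenvectorUnitary) i j‖ ^ 2 := by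
  set V : Matrix n n 𝕜 := (hS.eigenvectorUnitary : Matrix n n 𝕜)
  set W : Matrix n n 𝕜 := star (hT.eigenvectorUnitary : Matrix n n 𝕜) * V
  have hSV : star V * S * V = diagonal (RCLike.ofReal ∘ hS.eigenvalues) := by
    simpa using hS.conjStarAlgAut_star_eigenvectorUnitary
  have hTV : star V * T * V = star W * diagonal (RCLike.ofReal ∘ hT.eigenvalues) * W := by
    conv_lhs => rw [hT.spectral_theorem]
    simp [W, star_mul, Matrix.mul_assoc]
  intro j
  have hdiag := (hST.conjTranspose_mul_mul_same V).diag_nonneg (i := j)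
  rw [← star_eq_conjTranspose, Matrix.mul_sub, Matrix.sub_mul, hSV, hTV] at hdiag
  have hentry : (star W * diagonal (RCLike.ofReal ∘ hT.eigenvalues) * W -
      diagonal (RCLike.ofReal ∘ hS.eigenvalues) : Matrix n n 𝕜) j j =
      ((∑ i, hT.eigenvalues i * ‖W i j‖ ^ 2 - hS.eigenvalues j : ℝ) : 𝕜) := by
    rw [sub_apply, mul_apply]
    simp only [mul_diagonal, diagonal_apply_eq, star_apply, Function.comp_apply, RCLike.star_def]
    push_cast
    congr 1
    refine Finset.sum_congr rfl fun i _ => ?_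
    rw [mul_comm _ (W i j), ← mul_assoc, RCLike.mul_conj]
    ring
  rw [hentry, RCLike.ofReal_nonneg] at hdiag
  simp only [vecMul, dotProduct, of_apply]
  linarith

theorem sum_map_eigenvalues_le_of_sub_posSemidef {D : Set ℝ} {f : ℝ → ℝ}
    (hf : ConvexOn ℝ D f) (hf_mono : MonotoneOn f D) (hS : S.IsHermitian) (hT : T.IsHermitian)
    (hST : (T - S).PosSemidef) (hSD : ∀ j, hS.eigenvalues j ∈ D)
    (hTD : ∀ i, hT.eigenvalues i ∈ D) :
    ∑ j, f (hS.eigenvalues j) ≤ ∑ i, f (hT.eigenvalues i) :=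
  sum_le_sum_of_le_vecMul_of_mem_doublyStochastic
    (of_norm_sq_mem_doublyStochastic_of_mem_unitaryGroup (Submonoid.mul_mem _
      (Unitary.star_mem hT.eigenvectorUnitary.2) hS.eigenvectorUnitary.2))
    hf hf_mono hSD hTD (eigenvalues_le_vecMul_of_sub_posSemidef hS hT hST)

end IsHermitian

end Matrix

section MatAbs

variable {n : ℕ}

theorem posSemidef_matAbs (A : Matrix (Fin n) (Fin n) ℂ) : (matAbs A).PosSemidef :=
  (posSemidef_conjTranspose_mul_self A).posSemidef_sqrt

theorem matAbs_mul_self (A : Matrix (Fin n) (Fin n) ℂ) : matAbs A * matAbs A = Aᴴ * A :=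
  (posSemidef_conjTranspose_mul_self A).sqrt_mul_self

theorem trace_conjTranspose_mul_self_le_of_matAbs_le {A B : Matrix (Fin n) (Fin n) ℂ}
    (h : (matAbs B - matAbs A).PosSemidef) : (Aᴴ * A).trace ≤ (Bᴴ * B).trace := by
  simpa only [matAbs_mul_self] using
    (posSemidef_matAbs A).trace_mul_self_le_trace_mul_self (posSemidef_matAbs B) h

theorem schattenNorm_le_of_matAbs_le {p : ℝ} (hp : 1 ≤ p) {A B : Matrix (Fin n) (Fin n) ℂ}
    (h : (matAbs B - matAbs A).PosSemidef) : schattenNorm p A ≤ schattenNorm p B := by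
  have hA := posSemidef_matAbs A
  have hB := posSemidef_matAbs B
  have hsum := IsHermitian.sum_map_eigenvalues_le_of_sub_posSemidef (convexOn_rpow hp)
    (Real.monotoneOn_rpow_Ici_of_exponent_nonneg (by linarith)) hA.1 hB.1 h
    hA.eigenvalues_nonneg hB.eigenvalues_nonneg
  exact Real.rpow_le_rpow
    (Finset.sum_nonneg fun j _ => Real.rpow_nonneg (hA.eigenvalues_nonneg j) p) hsum (by positivity)

end MatAbs

theorem abs_dominates_abs_implies_trace_and_bj {n : ℕ} (A B : Matrix (Fin n) (Fin n) ℂ)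
    (h : ∀ γ : ℂ, (matAbs (B + γ • A) - matAbs B).PosSemidef) :
    (Bᴴ * A).trace = 0 ∧
      ∀ p : ℝ, 1 ≤ p → ∀ γ : ℂ, schattenNorm p B ≤ schattenNorm p (B + γ • A) :=
  ⟨trace_conjTranspose_mul_eq_zero_of_forall_le fun γ =>
      trace_conjTranspose_mul_self_le_of_matAbs_le (h γ),
    fun _ hp γ => schattenNorm_le_of_matAbs_le hp (h γ)⟩
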